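/- arXiv:2601.01731 — 2 statements merged into one kernel-verified Lean document; each statement's English description precedes it below -/
import Mathlib

section
/- On the Cartesian torus grid, let κ > 0, Δt > 0, let B satisfy hypotheses (H2) and (H3) with α ∈ [0,1), and let W^{ij}_{KJ} (i,j = 1,…,n; K,J ∈ G) be real numbers that are symmetric (W^{ij}_{KJ} = W^{ji}_{JK}); no positive semidefiniteness is assumed. Suppose u^{k−1}_i, u^k_i : G → [0,∞) satisfy one implicit Euler finite-volume step with the mid-point potentials p^k_i(K) = ∑_{j=1}^n ∑_{J∈G} m(J)·W^{ij}_{KJ}·(u^k_j(J) + u^{k−1}_j(J))/2. Then the discrete Rao entropy inequality holds: (1/Δt)·(H_R(u^k) − H_R(u^{k−1})) + (1−α)·P_R(u^k, p^k) ≤ −κ·X(u^k, p^k). -/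
open MeasureTheory Real Finset

namespace SG

instance : Fact ((0:ℝ) < 1) := ⟨one_pos⟩

variable {d : ℕ}

/-- Cells of the Cartesian torus grid. -/
abbrev Cell (M : Fin d → ℕ) := ∀ ℓ : Fin d, ZMod (M ℓ)

/-- Cell measure `m(K) = Δx₁⋯Δx_d`. -/
noncomputable def mK (M : Fin d → ℕ) : ℝ := ∏ ℓ, ((M ℓ : ℝ))⁻¹

/-- Transmissibility coefficient of an edge in direction `ℓ`:
`τ_σ = m(σ)/d_σ = m(K)·M_ℓ²`. -/
noncomputable def τ (M : Fin d → ℕ) (ℓ : Fin d) : ℝ := mK M * (M ℓ : ℝ) ^ 2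

/-- Shift a cell by `s` in direction `ℓ` (mod `M ℓ`). -/
def shift (M : Fin d → ℕ) (K : Cell M) (ℓ : Fin d) (s : ℤ) : Cell M :=
  Function.update K ℓ (K ℓ + (s : ZMod (M ℓ)))

/-- Hypothesis (H2): `B` is continuous on `[0,∞)` with `0 < B(s) ≤ 1` for `s ≥ 0`. -/
def H2 (B : ℝ → ℝ) : Prop :=
  ContinuousOn B (Set.Ici 0) ∧ ∀ s : ℝ, 0 ≤ s → 0 < B s ∧ B s ≤ 1

/-- Hypothesis (H3): `α ∈ [0,1)` and `B(s) ≥ 1 − α·s` for all `s ≥ 0`. -/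
def H3 (B : ℝ → ℝ) (α : ℝ) : Prop :=
  0 ≤ α ∧ α < 1 ∧ ∀ s : ℝ, 0 ≤ s → 1 - α * s ≤ B s

/-- The scaled weight function `B_κ(s) = κ·B(s/κ)`. -/
noncomputable def Bk (κ : ℝ) (B : ℝ → ℝ) (s : ℝ) : ℝ := κ * B (s / κ)

/-- Upwind value on the (oriented) edge from `K` to `L`. -/
noncomputable def upw {M : Fin d → ℕ} (u p : Cell M → ℝ) (K L : Cell M) : ℝ :=
  if 0 ≤ p L - p K then u L else u K

/-- Numerical flux `F_{K,σ}[u,p]` from `K` through the edge (in direction `ℓ`) to its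
neighbor `L`. -/
noncomputable def flux (M : Fin d → ℕ) (κ : ℝ) (B : ℝ → ℝ) (u p : Cell M → ℝ)
    (ℓ : Fin d) (K L : Cell M) : ℝ :=
  -(τ M ℓ) * (Bk κ B |p L - p K| * (u L - u K) + upw u p K L * (p L - p K))

/-- Sum of the numerical fluxes over the `2d` edges incident to `K`. -/
noncomputable def fluxSum (M : Fin d → ℕ) (κ : ℝ) (B : ℝ → ℝ) (u p : Cell M → ℝ)
    (K : Cell M) : ℝ :=
  ∑ ℓ : Fin d, (flux M κ B u p ℓ K (shift M K ℓ 1) + flux M κ B u p ℓ K (shift M K ℓ (-1)))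

/-- One implicit Euler finite-volume step with prescribed potential `p`. -/
def Step (M : Fin d → ℕ) (κ Δt : ℝ) (B : ℝ → ℝ) (uPrev u p : Cell M → ℝ) : Prop :=
  ∀ K : Cell M, mK M * (u K - uPrev K) / Δt + fluxSum M κ B u p K = 0

/-- Discrete Boltzmann entropy. -/
noncomputable def HB (M : Fin d → ℕ) [∀ ℓ, NeZero (M ℓ)] {n : ℕ}
    (u : Fin n → Cell M → ℝ) : ℝ :=
  ∑ i, ∑ K : Cell M, mK M * (u i K * (Real.log (u i K) - 1))

/-- Discrete Rao entropy associated to discrete kernels `Wd`. -/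
noncomputable def HR (M : Fin d → ℕ) [∀ ℓ, NeZero (M ℓ)] {n : ℕ}
    (Wd : Fin n → Fin n → Cell M → Cell M → ℝ) (u : Fin n → Cell M → ℝ) : ℝ :=
  (1/2) * ∑ i, ∑ j, ∑ K : Cell M, ∑ J : Cell M,
    mK M * mK M * Wd i j K J * u i K * u j J

/-- Boltzmann entropy production term `P_B`. -/
noncomputable def PB (M : Fin d → ℕ) [∀ ℓ, NeZero (M ℓ)] {n : ℕ} (κ : ℝ) (B : ℝ → ℝ)
    (u p : Fin n → Cell M → ℝ) : ℝ :=
  4 * ∑ i, ∑ K : Cell M, ∑ ℓ : Fin d,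
    τ M ℓ * Bk κ B |p i (shift M K ℓ 1) - p i K| *
      (Real.sqrt (u i (shift M K ℓ 1)) - Real.sqrt (u i K)) ^ 2

/-- Rao entropy production term `P_R`. -/
noncomputable def PR (M : Fin d → ℕ) [∀ ℓ, NeZero (M ℓ)] {n : ℕ}
    (u p : Fin n → Cell M → ℝ) : ℝ :=
  ∑ i, ∑ K : Cell M, ∑ ℓ : Fin d,
    τ M ℓ * upw (u i) (p i) K (shift M K ℓ 1) * (p i (shift M K ℓ 1) - p i K) ^ 2

/-- Cross term `X(u,p)`. -/
noncomputable def Xc (M : Fin d → ℕ) [∀ ℓ, NeZero (M ℓ)] {n : ℕ}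
    (u p : Fin n → Cell M → ℝ) : ℝ :=
  ∑ i, ∑ K : Cell M, ∑ ℓ : Fin d,
    τ M ℓ * (p i (shift M K ℓ 1) - p i K) * (u i (shift M K ℓ 1) - u i K)

/-- Discrete Fisher information `∑_i ∑_σ τ_σ |D_σ √u_i|²`. -/
noncomputable def Fisher (M : Fin d → ℕ) [∀ ℓ, NeZero (M ℓ)] {n : ℕ}
    (u : Fin n → Cell M → ℝ) : ℝ :=
  ∑ i, ∑ K : Cell M, ∑ ℓ : Fin d,
    τ M ℓ * (Real.sqrt (u i (shift M K ℓ 1)) - Real.sqrt (u i K)) ^ 2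

/-- The torus `T^d = (ℝ/ℤ)^d`. -/
abbrev Td (d : ℕ) := Fin d → AddCircle (1 : ℝ)

/-- The box `Q_K ⊆ T^d` corresponding to the cell `K`. -/
noncomputable def QK (M : Fin d → ℕ) (K : Cell M) : Set (Td d) :=
  Set.univ.pi fun ℓ => (fun t : ℝ => (t : AddCircle (1 : ℝ))) ''
    Set.Ico (((K ℓ).val : ℝ) / (M ℓ)) ((((K ℓ).val : ℝ) + 1) / (M ℓ))

/-- The discrete kernel `W_{KJ} = (m(K)m(J))⁻¹ ∫_{Q_K}∫_{Q_J} W(x−y) dy dx`. -/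
noncomputable def Wdisc (M : Fin d → ℕ) (W : Td d → ℝ) (K J : Cell M) : ℝ :=
  (mK M * mK M)⁻¹ * ∫ x in QK M K, ∫ y in QK M J, W (x - y)

/-- The discrete nonlocal potential `p_i(K) = ∑_j ∑_J m(J)·Wd^{ij}_{KJ}·u_j(J)`. -/
noncomputable def pot (M : Fin d → ℕ) [∀ ℓ, NeZero (M ℓ)] {n : ℕ}
    (Wd : Fin n → Fin n → Cell M → Cell M → ℝ) (u : Fin n → Cell M → ℝ)
    (i : Fin n) (K : Cell M) : ℝ :=
  ∑ j, ∑ J : Cell M, mK M * Wd i j K J * u j J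

/-- Discrete `L^q` norm of a cell function. -/
noncomputable def normq (M : Fin d → ℕ) [∀ ℓ, NeZero (M ℓ)] (q : ℝ)
    (u : Cell M → ℝ) : ℝ :=
  (∑ K : Cell M, mK M * |u K| ^ q) ^ (1/q)

/-- Discrete `L^q` norm of an edge function (dual-cell measure `m(Δ_σ) = m(σ)·d_σ = m(K)`). -/
noncomputable def enorm (M : Fin d → ℕ) [∀ ℓ, NeZero (M ℓ)] (q : ℝ)
    (w : Cell M → Fin d → ℝ) : ℝ :=
  (∑ K : Cell M, ∑ ℓ : Fin d, mK M * |w K ℓ| ^ q) ^ (1/q)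

/-- Magnitude of the discrete gradient on the edge `(K,ℓ)`:
`|∇^h_σ v| = d·D_σ v/d_σ`. -/
noncomputable def gradh (M : Fin d → ℕ) (v : Cell M → ℝ) (K : Cell M) (ℓ : Fin d) : ℝ :=
  d * (M ℓ : ℝ) * |v (shift M K ℓ 1) - v K|


/- ### Auxiliary lemmas -/

lemma mK_nonneg' (M : Fin d → ℕ) : 0 ≤ mK M :=
  Finset.prod_nonneg fun _ _ => inv_nonneg.2 (Nat.cast_nonneg _)

lemma tau_nonneg' (M : Fin d → ℕ) (ℓ : Fin d) : 0 ≤ τ M ℓ :=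
  mul_nonneg (mK_nonneg' M) (sq_nonneg _)

lemma shift_shift' (M : Fin d → ℕ) (K : Cell M) (ℓ : Fin d) (s t : ℤ) :
    shift M (shift M K ℓ s) ℓ t = shift M K ℓ (s + t) := by
  unfold shift
  rw [Function.update_idem, Function.update_self]
  congr 1
  push_cast
  ring

lemma shift_zero' (M : Fin d → ℕ) (K : Cell M) (ℓ : Fin d) :
    shift M K ℓ 0 = K := by
  simp [shift]

/-- The shift in direction `ℓ` as a bijection of the grid. -/
def shiftEquiv' (M : Fin d → ℕ) (ℓ : Fin d) : Cell M ≃ Cell M where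
  toFun K := shift M K ℓ 1
  invFun K := shift M K ℓ (-1)
  left_inv K := by
    show shift M (shift M K ℓ 1) ℓ (-1) = K
    rw [shift_shift', show (1:ℤ) + -1 = 0 by ring, shift_zero']
  right_inv K := by
    show shift M (shift M K ℓ (-1)) ℓ 1 = K
    rw [shift_shift', show (-1:ℤ) + 1 = 0 by ring, shift_zero']

lemma flux_antisym' (M : Fin d → ℕ) (κ : ℝ) (B : ℝ → ℝ) (u p : Cell M → ℝ)
    (ℓ : Fin d) (K L : Cell M) :
    flux M κ B u p ℓ L K = - flux M κ B u p ℓ K L := by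
  unfold flux upw
  rw [abs_sub_comm (p K) (p L)]
  rcases lt_trichotomy (p L - p K) 0 with h | h | h
  · rw [if_neg (not_le.2 h), if_pos (by linarith : (0:ℝ) ≤ p K - p L)]
    ring
  · have h1 : p K - p L = 0 := by linarith
    rw [h, h1]
    ring
  · rw [if_pos h.le, if_neg (not_le.2 (by linarith : p K - p L < 0))]
    ring

/-- Discrete summation by parts on the torus grid. -/
lemma parts' (M : Fin d → ℕ) [∀ ℓ, NeZero (M ℓ)] (κ : ℝ) (B : ℝ → ℝ)
    (u p : Cell M → ℝ) :
    ∑ K : Cell M, p K * fluxSum M κ B u p K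
      = ∑ K : Cell M, ∑ ℓ : Fin d,
          (p K - p (shift M K ℓ 1)) * flux M κ B u p ℓ K (shift M K ℓ 1) := by
  have key : ∀ ℓ : Fin d,
      (∑ K : Cell M, p K * flux M κ B u p ℓ K (shift M K ℓ (-1)))
        = ∑ K : Cell M, -(p (shift M K ℓ 1) * flux M κ B u p ℓ K (shift M K ℓ 1)) := by
    intro ℓ
    rw [← Equiv.sum_comp (shiftEquiv' M ℓ)
      (fun K => p K * flux M κ B u p ℓ K (shift M K ℓ (-1)))]
    refine Finset.sum_congr rfl fun K _ => ?_
    show p (shift M K ℓ 1) * flux M κ B u p ℓ (shift M K ℓ 1) (shift M (shift M K ℓ 1) ℓ (-1))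
      = -(p (shift M K ℓ 1) * flux M κ B u p ℓ K (shift M K ℓ 1))
    rw [shift_shift', show (1:ℤ) + -1 = 0 by ring, shift_zero', flux_antisym']
    ring
  calc
    ∑ K : Cell M, p K * fluxSum M κ B u p K
        = ∑ ℓ : Fin d, ∑ K : Cell M,
            (p K * flux M κ B u p ℓ K (shift M K ℓ 1)
              + p K * flux M κ B u p ℓ K (shift M K ℓ (-1))) := by
          rw [← Finset.sum_comm]
          refine Finset.sum_congr rfl fun K _ => ?_
          simp [fluxSum, Finset.mul_sum, mul_add]
    _ = ∑ ℓ : Fin d, ∑ K : Cell M,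
            (p K * flux M κ B u p ℓ K (shift M K ℓ 1)
              + -(p (shift M K ℓ 1) * flux M κ B u p ℓ K (shift M K ℓ 1))) := by
          refine Finset.sum_congr rfl fun ℓ _ => ?_
          rw [Finset.sum_add_distrib, Finset.sum_add_distrib, key ℓ]
    _ = ∑ K : Cell M, ∑ ℓ : Fin d,
          (p K - p (shift M K ℓ 1)) * flux M κ B u p ℓ K (shift M K ℓ 1) := by
          rw [Finset.sum_comm]
          exact Finset.sum_congr rfl fun K _ => Finset.sum_congr rfl fun ℓ _ => by ring

/-- The Rao entropy difference via the mid-point potential. -/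
lemma HR_diff' (M : Fin d → ℕ) [∀ ℓ, NeZero (M ℓ)] {n : ℕ}
    (Wd : Fin n → Fin n → Cell M → Cell M → ℝ)
    (hsym : ∀ i j K J, Wd i j K J = Wd j i J K)
    (u v : Fin n → Cell M → ℝ) :
    HR M Wd u - HR M Wd v
      = ∑ i, ∑ K : Cell M,
          mK M * (u i K - v i K) * pot M Wd (fun j J => (u j J + v j J) / 2) i K := by
  have swapS : ∀ f g : Fin n → Cell M → ℝ,
      (∑ i, ∑ j, ∑ K : Cell M, ∑ J : Cell M,
          mK M * mK M * Wd i j K J * f i K * g j J)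
        = ∑ i, ∑ j, ∑ K : Cell M, ∑ J : Cell M,
            mK M * mK M * Wd i j K J * g i K * f j J := by
    intro f g
    rw [Finset.sum_comm]
    refine Finset.sum_congr rfl fun i _ => Finset.sum_congr rfl fun j _ => ?_
    rw [Finset.sum_comm]
    refine Finset.sum_congr rfl fun K _ => Finset.sum_congr rfl fun J _ => ?_
    rw [hsym]
    ring
  have comb :
      (∑ i, ∑ j, ∑ K : Cell M, ∑ J : Cell M,
          mK M * mK M * Wd i j K J * u i K * u j J)
        - (∑ i, ∑ j, ∑ K : Cell M, ∑ J : Cell M,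
            mK M * mK M * Wd i j K J * v i K * v j J)
      = (∑ i, ∑ j, ∑ K : Cell M, ∑ J : Cell M,
          mK M * mK M * Wd i j K J * (u i K - v i K) * ((u j J + v j J) / 2))
        + (∑ i, ∑ j, ∑ K : Cell M, ∑ J : Cell M,
            mK M * mK M * Wd i j K J * ((u i K + v i K) / 2) * (u j J - v j J)) := by
    rw [← Finset.sum_sub_distrib, ← Finset.sum_add_distrib]
    refine Finset.sum_congr rfl fun i _ => ?_
    rw [← Finset.sum_sub_distrib, ← Finset.sum_add_distrib]
    refine Finset.sum_congr rfl fun j _ => ?_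
    rw [← Finset.sum_sub_distrib, ← Finset.sum_add_distrib]
    refine Finset.sum_congr rfl fun K _ => ?_
    rw [← Finset.sum_sub_distrib, ← Finset.sum_add_distrib]
    exact Finset.sum_congr rfl fun J _ => by ring
  have hswap := swapS (fun i K => (u i K + v i K) / 2) (fun i K => u i K - v i K)
  have hrhs : (∑ i, ∑ K : Cell M,
        mK M * (u i K - v i K) * pot M Wd (fun j J => (u j J + v j J) / 2) i K)
      = ∑ i, ∑ j, ∑ K : Cell M, ∑ J : Cell M,
          mK M * mK M * Wd i j K J * (u i K - v i K) * ((u j J + v j J) / 2) := by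
    refine Finset.sum_congr rfl fun i _ => ?_
    rw [← Finset.sum_comm]
    refine Finset.sum_congr rfl fun K _ => ?_
    simp only [pot, Finset.mul_sum]
    exact Finset.sum_congr rfl fun j _ => Finset.sum_congr rfl fun J _ => by ring
  have hHR : ∀ w : Fin n → Cell M → ℝ, HR M Wd w
      = (1/2) * ∑ i, ∑ j, ∑ K : Cell M, ∑ J : Cell M,
          mK M * mK M * Wd i j K J * w i K * w j J := fun w => rfl
  rw [hHR, hHR, hrhs]
  linarith [comb, hswap]

lemma Bk_bounds' {κ α : ℝ} {B : ℝ → ℝ} (hκ : 0 < κ) (hB : H2 B) (hB3 : H3 B α)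
    {s : ℝ} (hs : 0 ≤ s) : κ - α * s ≤ Bk κ B s ∧ Bk κ B s ≤ κ := by
  have hsk : 0 ≤ s / κ := div_nonneg hs hκ.le
  constructor
  · have h1 := hB3.2.2 _ hsk
    have h2 : κ * (1 - α * (s / κ)) ≤ κ * B (s / κ) :=
      mul_le_mul_of_nonneg_left h1 hκ.le
    have h3 : κ * (1 - α * (s / κ)) = κ - α * s := by
      field_simp
    rw [h3] at h2
    exact h2
  · have h1 := (hB.2 _ hsk).2
    have h2 : κ * B (s / κ) ≤ κ * 1 := mul_le_mul_of_nonneg_left h1 hκ.le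
    simpa [Bk] using h2

lemma term_ineq' {κ α : ℝ} {B : ℝ → ℝ} (hκ : 0 < κ) (hB : H2 B) (hB3 : H3 B α)
    (a b t : ℝ) (ha : 0 ≤ a) (hb : 0 ≤ b) :
    (κ - Bk κ B |t|) * t * (b - a) ≤ α * (if 0 ≤ t then b else a) * t ^ 2 := by
  obtain ⟨h1, h2⟩ := Bk_bounds' hκ hB hB3 (abs_nonneg t)
  have hα : 0 ≤ α := hB3.1
  split_ifs with ht
  · rw [abs_of_nonneg ht] at h1 h2 ⊢
    have hc0 : 0 ≤ κ - Bk κ B t := by linarith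
    have hc1 : κ - Bk κ B t ≤ α * t := by linarith
    rcases le_or_gt (b - a) 0 with hba | hba
    · have hle : (κ - Bk κ B t) * t * (b - a) ≤ 0 :=
        mul_nonpos_of_nonneg_of_nonpos (mul_nonneg hc0 ht) hba
      nlinarith [mul_nonneg (mul_nonneg hα hb) (sq_nonneg t)]
    · nlinarith [mul_le_mul_of_nonneg_right hc1 (mul_nonneg ht hba.le),
        mul_nonneg (mul_nonneg hα (sq_nonneg t)) ha]
  · push_neg at ht
    rw [abs_of_neg ht] at h1 h2 ⊢
    have hc0 : 0 ≤ κ - Bk κ B (-t) := by linarith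
    have hc1 : κ - Bk κ B (-t) ≤ α * -t := by linarith
    rcases le_or_gt 0 (b - a) with hba | hba
    · have hle : (κ - Bk κ B (-t)) * t * (b - a) ≤ 0 :=
        mul_nonpos_of_nonpos_of_nonneg
          (mul_nonpos_of_nonneg_of_nonpos hc0 ht.le) hba
      nlinarith [mul_nonneg (mul_nonneg hα ha) (sq_nonneg t)]
    · nlinarith [mul_le_mul_of_nonneg_right hc1
          (mul_nonneg (neg_nonneg.2 ht.le) (by linarith : (0:ℝ) ≤ a - b)),
        mul_nonneg (mul_nonneg hα (sq_nonneg t)) hb]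

/-- discrete Rao entropy inequality for the mid-point potentials,
assuming only symmetric discrete kernels. -/
theorem discrete_rao_entropy_inequality_midpoint {d n : ℕ} (M : Fin d → ℕ)
    [∀ ℓ, NeZero (M ℓ)]
    (κ Δt : ℝ) (hκ : 0 < κ) (hΔt : 0 < Δt)
    (B : ℝ → ℝ) (α : ℝ) (hB : H2 B) (hB3 : H3 B α)
    (Wd : Fin n → Fin n → Cell M → Cell M → ℝ)
    (hsym : ∀ i j K J, Wd i j K J = Wd j i J K)
    (uprev u : Fin n → Cell M → ℝ)
    (hprev : ∀ i K, 0 ≤ uprev i K) (hu : ∀ i K, 0 ≤ u i K)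
    (hstep : ∀ i, Step M κ Δt B (uprev i) (u i)
        (pot M Wd (fun j J => (u j J + uprev j J) / 2) i)) :
    (1/Δt) * (HR M Wd u - HR M Wd uprev)
        + (1 - α) * PR M u (pot M Wd (fun j J => (u j J + uprev j J) / 2))
      ≤ -(κ * Xc M u (pot M Wd (fun j J => (u j J + uprev j J) / 2))) := by
  classical
  set p : Fin n → Cell M → ℝ := pot M Wd (fun j J => (u j J + uprev j J) / 2) with hpdef
  -- The entropy difference via the step equation and summation by parts.
  have hdiff := HR_diff' M Wd hsym u uprev
  rw [← hpdef] at hdiff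
  have hA : (1 / Δt) * (HR M Wd u - HR M Wd uprev)
      = ∑ i, ∑ K : Cell M, ∑ ℓ : Fin d,
          (p i (shift M K ℓ 1) - p i K) * flux M κ B (u i) (p i) ℓ K (shift M K ℓ 1) := by
    rw [hdiff, Finset.mul_sum]
    refine Finset.sum_congr rfl fun i _ => ?_
    calc (1 / Δt) * ∑ K : Cell M, mK M * (u i K - uprev i K) * p i K
        = -∑ K : Cell M, p i K * fluxSum M κ B (u i) (p i) K := by
          rw [Finset.mul_sum, ← Finset.sum_neg_distrib]
          refine Finset.sum_congr rfl fun K _ => ?_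
          have h := hstep i K
          have hf : fluxSum M κ B (u i) (p i) K
              = -(mK M * (u i K - uprev i K) / Δt) := by linarith
          rw [hf]
          field_simp
      _ = ∑ K : Cell M, ∑ ℓ : Fin d,
            (p i (shift M K ℓ 1) - p i K) * flux M κ B (u i) (p i) ℓ K (shift M K ℓ 1) := by
          rw [parts' M κ B (u i) (p i), ← Finset.sum_neg_distrib]
          refine Finset.sum_congr rfl fun K _ => ?_
          rw [← Finset.sum_neg_distrib]
          exact Finset.sum_congr rfl fun ℓ _ => by ring
  -- Termwise inequality.
  have hfinal : ∀ (i : Fin n) (K : Cell M) (ℓ : Fin d),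
      (p i (shift M K ℓ 1) - p i K) * flux M κ B (u i) (p i) ℓ K (shift M K ℓ 1)
        + (1 - α) * (τ M ℓ * upw (u i) (p i) K (shift M K ℓ 1)
            * (p i (shift M K ℓ 1) - p i K) ^ 2)
        + κ * (τ M ℓ * (p i (shift M K ℓ 1) - p i K)
            * (u i (shift M K ℓ 1) - u i K)) ≤ 0 := by
    intro i K ℓ
    have hterm := term_ineq' hκ hB hB3 (u i K) (u i (shift M K ℓ 1))
      (p i (shift M K ℓ 1) - p i K) (hu i K) (hu i _)
    have hτ := tau_nonneg' M ℓ
    have h2 := mul_le_mul_of_nonneg_left hterm hτ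
    unfold flux upw
    unfold Bk at h2 ⊢
    nlinarith [h2]
  -- Sum up.
  have hcomb :
      (∑ i, ∑ K : Cell M, ∑ ℓ : Fin d,
          (p i (shift M K ℓ 1) - p i K) * flux M κ B (u i) (p i) ℓ K (shift M K ℓ 1))
        + (1 - α) * PR M u p + κ * Xc M u p
      = ∑ i, ∑ K : Cell M, ∑ ℓ : Fin d,
          ((p i (shift M K ℓ 1) - p i K) * flux M κ B (u i) (p i) ℓ K (shift M K ℓ 1)
            + (1 - α) * (τ M ℓ * upw (u i) (p i) K (shift M K ℓ 1)
                * (p i (shift M K ℓ 1) - p i K) ^ 2)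
            + κ * (τ M ℓ * (p i (shift M K ℓ 1) - p i K)
                * (u i (shift M K ℓ 1) - u i K))) := by
    unfold PR Xc
    simp only [Finset.mul_sum, ← Finset.sum_add_distrib]
  have hsum : (∑ i, ∑ K : Cell M, ∑ ℓ : Fin d,
      ((p i (shift M K ℓ 1) - p i K) * flux M κ B (u i) (p i) ℓ K (shift M K ℓ 1)
        + (1 - α) * (τ M ℓ * upw (u i) (p i) K (shift M K ℓ 1)
            * (p i (shift M K ℓ 1) - p i K) ^ 2)
        + κ * (τ M ℓ * (p i (shift M K ℓ 1) - p i K)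
            * (u i (shift M K ℓ 1) - u i K)))) ≤ 0 :=
    Finset.sum_nonpos fun i _ => Finset.sum_nonpos fun K _ =>
      Finset.sum_nonpos fun ℓ _ => hfinal i K ℓ
  rw [hA]
  linarith [hcomb, hsum]

end SG
end

section
/- On the Cartesian torus grid, let W_{ij} ∈ L^∞(T^d) (i,j = 1,…,n) satisfy the symmetry W_{ij}(x) = W_{ji}(−x) for a.e. x. Let u^{k−1}_i, u^k_i : G → [0,∞) have discrete masses bounded by m_i ≥ 0, i.e. ∑_{K∈G} m(K)·u^{k−1}_i(K) ≤ m_i and ∑_{K∈G} m(K)·u^k_i(K) ≤ m_i, let p^k_i be the mid-point potential p^k_i(K) = ∑_{j=1}^n ∑_{J∈G} m(J)·W^{ij}_{KJ}·(u^k_j(J) + u^{k−1}_j(J))/2, and set c* = max_{j=1,…,n} ∑_{i=1}^n ‖W_{ij}‖_{L^∞(T^d)}·m_i. Then the cross term satisfies X(u^k, p^k) ≤ c*·∑_{i=1}^n ∑_{σ∈E} τ_σ·(3·|D_σ √(u^k_i)|² + |D_σ √(u^{k−1}_i)|²). -/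
/-!
Since the discrete kernels are translation invariant,
`D_σ p_i = ∑_j ∑_J m(J) W^{ij}_{KJ} D_{σ'} w_j` with `σ'` the translate of `σ` to `J`; hence the cross term is a bilinear form in the discrete
gradients of `u_i` and `w_j` whose coefficients are bounded by `‖W_{ij}‖_∞`. Writing
`D u = D√u · (√u_K + √u_L)`, Cauchy–Schwarz bounds each factor `∑_K m(K) |D_σ u| / Δx_ℓ` by
`2 √(mass) √(Fisher)`. Young's inequality together with the column sums `c*` (and the row sums,
equal to them by the symmetry `W_{ij}(x) = W_{ji}(-x)`) gives `X(u, p[w]) ≤ 2 c* (F(u) + F(w))`,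
and the mid-point potential averages the cases `w = u^k` and `w = u^{k-1}`.
-/

open MeasureTheory Real Finset

namespace SG

variable {d : ℕ}

lemma mK_pos (M : Fin d → ℕ) [∀ ℓ, NeZero (M ℓ)] : 0 < mK M :=
  Finset.prod_pos fun _ _ => inv_pos.2 (Nat.cast_pos.2 (NeZero.pos _))

lemma AddCircle.coe_image_Ico_subset_closedBall (T : ℝ) (a b : ℝ) :
    ((↑) : ℝ → AddCircle T) '' Set.Ico a b ⊆ Metric.closedBall ↑((a + b) / 2) ((b - a) / 2) := by
  rintro _ ⟨t, ⟨hat, htb⟩, rfl⟩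
  rw [Metric.mem_closedBall, dist_eq_norm, ← AddCircle.coe_sub]
  refine QuotientAddGroup.norm_mk_le_norm.trans ?_
  rw [Real.norm_eq_abs, abs_le]
  constructor <;> linarith

lemma AddCircle.volume_coe_image_Ico_le (T : ℝ) [Fact (0 < T)] {a b : ℝ} (h : b - a ≤ T) :
    volume (((↑) : ℝ → AddCircle T) '' Set.Ico a b) ≤ ENNReal.ofReal (b - a) := by
  refine (measure_mono (coe_image_Ico_subset_closedBall T a b)).trans_eq ?_
  rw [AddCircle.volume_closedBall, mul_div_cancel₀ _ two_ne_zero, min_eq_right h]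

lemma volume_QK_le (M : Fin d → ℕ) [∀ ℓ, NeZero (M ℓ)] (K : Cell M) :
    volume (QK M K) ≤ ENNReal.ofReal (mK M) := by
  rw [QK, volume_pi_pi, mK, ENNReal.ofReal_prod_of_nonneg fun ℓ _ => by positivity]
  refine Finset.prod_le_prod' fun ℓ _ => ?_
  have hlen : (((K ℓ).val : ℝ) + 1) / M ℓ - (K ℓ).val / M ℓ = (M ℓ : ℝ)⁻¹ := by
    rw [← sub_div, add_sub_cancel_left, one_div]
  refine (AddCircle.volume_coe_image_Ico_le 1 ?_).trans_eq (by rw [hlen])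
  rw [hlen]
  exact inv_le_one_of_one_le₀ (Nat.one_le_cast.mpr NeZero.one_le)

lemma norm_setIntegral_setIntegral_sub_le {G : Type*} [MeasurableSpace G] [AddCommGroup G]
    [MeasurableAdd G] [MeasurableNeg G] {μ : Measure G} [μ.IsNegInvariant] [μ.IsAddLeftInvariant]
    {W : G → ℝ} (hW : MemLp W ⊤ μ) {s t : Set G} (hs : μ s < ⊤) (ht : μ t < ⊤) :
    ‖∫ x in s, ∫ y in t, W (x - y) ∂μ ∂μ‖ ≤ lpNorm W ⊤ μ * μ.real t * μ.real s := by
  have hinner (x : G) : ‖∫ y in t, W (x - y) ∂μ‖ ≤ lpNorm W ⊤ μ * μ.real t :=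
    norm_setIntegral_le_of_norm_le_const_ae ht <| ae_restrict_of_ae <|
      (Measure.measurePreserving_sub_left μ x).quasiMeasurePreserving.ae
        (ae_le_lpNorm_exponent_top hW)
  exact norm_setIntegral_le_of_norm_le_const_ae hs (Filter.Eventually.of_forall hinner)

instance (d : ℕ) : (volume : Measure (Td d)).IsNegInvariant := Measure.pi.isNegInvariant _

lemma eLpNorm_eq_of_ae_eq_comp_neg {G : Type*} [MeasurableSpace G] [AddGroup G] [MeasurableNeg G]
    {μ : Measure G} [μ.IsNegInvariant] {f g : G → ℝ} (hg : AEStronglyMeasurable g μ)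
    (hfg : ∀ᵐ x ∂μ, f x = g (-x)) (p : ENNReal) : eLpNorm f p μ = eLpNorm g p μ :=
  (eLpNorm_congr_ae hfg).trans
    (eLpNorm_comp_measurePreserving (f := Neg.neg) hg (Measure.measurePreserving_neg μ))

lemma abs_Wdisc_le (M : Fin d → ℕ) [∀ ℓ, NeZero (M ℓ)] {W : Td d → ℝ} (hW : MemLp W ⊤)
    (K J : Cell M) : |Wdisc M W K J| ≤ (eLpNorm W ⊤ volume).toReal := by
  have hmK := mK_pos M
  have hvol (L : Cell M) : volume.real (QK M L) ≤ mK M :=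
    ENNReal.toReal_le_of_le_ofReal hmK.le (volume_QK_le M L)
  have hint := norm_setIntegral_setIntegral_sub_le hW
    ((volume_QK_le M K).trans_lt ENNReal.ofReal_lt_top)
    ((volume_QK_le M J).trans_lt ENNReal.ofReal_lt_top)
  rw [toReal_eLpNorm hW.1, Wdisc, abs_mul, abs_of_pos (inv_pos.2 (mul_pos hmK hmK)),
    inv_mul_le_iff₀ (mul_pos hmK hmK)]
  calc _ ≤ lpNorm W ⊤ volume * volume.real (QK M J) * volume.real (QK M K) := hint
    _ ≤ lpNorm W ⊤ volume * mK M * mK M := by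
      have := lpNorm_nonneg (f := W) (p := ⊤) (μ := volume)
      gcongr
      exacts [hvol J, hvol K]
    _ = _ := by ring

lemma ZMod.coe_image_Ico_val_div {N : ℕ} [NeZero N] (k : ZMod N) :
    ((↑) : ℝ → UnitAddCircle) '' Set.Ico (k.val / N : ℝ) ((k.val + 1) / N)
      = (ZMod.toAddCircle k + ·) '' (((↑) : ℝ → UnitAddCircle) '' Set.Ico 0 (N : ℝ)⁻¹) := by
  rw [add_div, one_div, ← add_zero ((k.val : ℝ) / N), add_assoc, zero_add,
    ← Set.image_const_add_Ico, Set.image_image, Set.image_image, ZMod.toAddCircle_apply]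
  simp only [AddCircle.coe_add]

lemma QK_add (M : Fin d → ℕ) [∀ ℓ, NeZero (M ℓ)] (K L : Cell M) :
    QK M (K + L) = ((fun ℓ => ZMod.toAddCircle (L ℓ)) + ·) '' QK M K := by
  change _ = Pi.map (fun ℓ => (ZMod.toAddCircle (L ℓ) + ·)) '' _
  rw [QK, QK, Set.piMap_image_univ_pi]
  congr 1
  funext ℓ
  simp only [Pi.add_apply, ZMod.coe_image_Ico_val_div, Set.image_image, map_add, add_assoc,
    add_left_comm (ZMod.toAddCircle (K ℓ))]

lemma setIntegral_image_add_left {G : Type*} [MeasurableSpace G] [AddGroup G] [MeasurableAdd G]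
    (μ : Measure G) [μ.IsAddLeftInvariant] (t : G) (s : Set G) (f : G → ℝ) :
    ∫ x in (t + ·) '' s, f x ∂μ = ∫ x in s, f (t + x) ∂μ :=
  (measurePreserving_add_left μ t).setIntegral_image_emb
    (MeasurableEquiv.addLeft t).measurableEmbedding f s

lemma Wdisc_add_add (M : Fin d → ℕ) [∀ ℓ, NeZero (M ℓ)] (W : Td d → ℝ) (K J L : Cell M) :
    Wdisc M W (K + L) (J + L) = Wdisc M W K J := by
  simp only [Wdisc, QK_add, setIntegral_image_add_left, add_sub_add_left_eq_sub]

lemma sum_abs_sub_le_of_perm {α : Type*} [Fintype α] (σ : Equiv.Perm α) {w : α → ℝ}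
    (hw : ∀ a, 0 ≤ w a) :
    ∑ a, |w (σ a) - w a| ≤ 2 * √(∑ a, w a) * √(∑ a, (√(w (σ a)) - √(w a)) ^ 2) := by
  have hfactor (a : α) : |w (σ a) - w a| = |√(w (σ a)) - √(w a)| * (√(w (σ a)) + √(w a)) := by
    rw [← abs_of_nonneg (by positivity : 0 ≤ √(w (σ a)) + √(w a)), ← abs_mul]
    congr 1
    linear_combination Real.sq_sqrt (hw a) - Real.sq_sqrt (hw (σ a))
  have hsum : ∑ a, (√(w (σ a)) + √(w a)) ^ 2 ≤ 2 ^ 2 * ∑ a, w a := by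
    calc ∑ a, (√(w (σ a)) + √(w a)) ^ 2 ≤ ∑ a, 2 * (w (σ a) + w a) := by
          refine Finset.sum_le_sum fun a _ => ?_
          nlinarith [sq_nonneg (√(w (σ a)) - √(w a)), Real.sq_sqrt (hw (σ a)), Real.sq_sqrt (hw a)]
      _ = 2 ^ 2 * ∑ a, w a := by
          rw [← Finset.mul_sum, Finset.sum_add_distrib, Equiv.sum_comp]; ring
  calc ∑ a, |w (σ a) - w a|
      = ∑ a, |√(w (σ a)) - √(w a)| * (√(w (σ a)) + √(w a)) := by simp only [hfactor]
    _ ≤ √(∑ a, |√(w (σ a)) - √(w a)| ^ 2) * √(∑ a, (√(w (σ a)) + √(w a)) ^ 2) :=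
        Real.sum_mul_le_sqrt_mul_sqrt _ _ _
    _ ≤ √(∑ a, (√(w (σ a)) - √(w a)) ^ 2) * √(2 ^ 2 * ∑ a, w a) := by
        simp only [sq_abs]; gcongr
    _ = 2 * √(∑ a, w a) * √(∑ a, (√(w (σ a)) - √(w a)) ^ 2) := by
        rw [Real.sqrt_mul (by positivity), Real.sqrt_sq zero_le_two]; ring

lemma two_mul_sum_sum_mul_sqrt_le {ι : Type*} [Fintype ι] {C : ι → ι → ℝ} {m x y : ι → ℝ}
    {c : ℝ} (hC : ∀ i j, 0 ≤ C i j) (hm : ∀ i, 0 ≤ m i) (hx : ∀ i, 0 ≤ x i)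
    (hy : ∀ i, 0 ≤ y i) (hcol : ∀ j, ∑ i, C i j * m i ≤ c) (hrow : ∀ i, ∑ j, C i j * m j ≤ c) :
    2 * ∑ i, ∑ j, C i j * (√(m i * x i) * √(m j * y j)) ≤ c * (∑ i, x i + ∑ j, y j) := by
  have hamgm (i j : ι) : 2 * (√(m i * x i) * √(m j * y j)) ≤ m j * x i + m i * y j := by
    have hswap : √(m i * x i) * √(m j * y j) = √(m j * x i) * √(m i * y j) := by
      rw [← Real.sqrt_mul (mul_nonneg (hm i) (hx i)), ← Real.sqrt_mul (mul_nonneg (hm j) (hx i))]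
      ring_nf
    have h := two_mul_le_add_sq √(m j * x i) √(m i * y j)
    rw [Real.sq_sqrt (mul_nonneg (hm j) (hx i)), Real.sq_sqrt (mul_nonneg (hm i) (hy j))] at h
    linarith
  calc 2 * ∑ i, ∑ j, C i j * (√(m i * x i) * √(m j * y j))
      = ∑ i, ∑ j, C i j * (2 * (√(m i * x i) * √(m j * y j))) := by
        simp only [Finset.mul_sum]; ring_nf
    _ ≤ ∑ i, ∑ j, C i j * (m j * x i + m i * y j) :=
        Finset.sum_le_sum fun i _ => Finset.sum_le_sum fun j _ =>
          mul_le_mul_of_nonneg_left (hamgm i j) (hC i j)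
    _ = ∑ i, (∑ j, C i j * m j) * x i + ∑ j, (∑ i, C i j * m i) * y j := by
        simp only [mul_add, Finset.sum_add_distrib, Finset.sum_mul]
        rw [Finset.sum_comm (f := fun i j => C i j * (m i * y j))]
        simp only [mul_assoc]
    _ ≤ ∑ i, c * x i + ∑ j, c * y j :=
        add_le_add
          (Finset.sum_le_sum fun i _ => mul_le_mul_of_nonneg_right (hrow i) (hx i))
          (Finset.sum_le_sum fun j _ => mul_le_mul_of_nonneg_right (hcol j) (hy j))
    _ = c * (∑ i, x i + ∑ j, y j) := by rw [mul_add, Finset.mul_sum, Finset.mul_sum]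

lemma sum_sum_mul_mul_le {α β : Type*} [Fintype α] [Fintype β] {k : α → β → ℝ} {C : ℝ}
    (hk : ∀ a b, |k a b| ≤ C) (f : α → ℝ) (g : β → ℝ) :
    ∑ a, ∑ b, f a * k a b * g b ≤ C * ((∑ a, |f a|) * ∑ b, |g b|) := by
  rw [Finset.sum_mul_sum, Finset.mul_sum]
  refine Finset.sum_le_sum fun a _ => ?_
  rw [Finset.mul_sum]
  refine Finset.sum_le_sum fun b _ => ?_
  calc f a * k a b * g b ≤ |f a * k a b * g b| := le_abs_self _
    _ = |k a b| * (|f a| * |g b|) := by rw [abs_mul, abs_mul]; ring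
    _ ≤ C * (|f a| * |g b|) := by gcongr; exact hk a b

lemma shift_eq_add (M : Fin d → ℕ) (K : Cell M) (ℓ : Fin d) (s : ℤ) :
    shift M K ℓ s = K + Pi.single ℓ (s : ZMod (M ℓ)) := by
  funext m
  rcases eq_or_ne m ℓ with rfl | hm
  · simp [shift]
  · simp [shift, hm]

section Discrete

variable (M : Fin d → ℕ) [∀ ℓ, NeZero (M ℓ)]

/-- `∑_{σ ∥ e_ℓ} m(K) |D_σ w| / Δx_ℓ`. -/
noncomputable def dirVar (ℓ : Fin d) (w : Cell M → ℝ) : ℝ :=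
  ∑ K : Cell M, mK M * M ℓ * |w (shift M K ℓ 1) - w K|

/-- The direction-`ℓ` part `∑_{σ ∥ e_ℓ} τ_σ |D_σ √w|²` of the discrete Fisher information. -/
noncomputable def dirFisher (ℓ : Fin d) (w : Cell M → ℝ) : ℝ :=
  ∑ K : Cell M, τ M ℓ * (√(w (shift M K ℓ 1)) - √(w K)) ^ 2

lemma dirVar_nonneg (ℓ : Fin d) (w : Cell M → ℝ) : 0 ≤ dirVar M ℓ w :=
  Finset.sum_nonneg fun _ _ =>
    mul_nonneg (mul_nonneg (mK_pos M).le (Nat.cast_nonneg _)) (abs_nonneg _)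

lemma dirFisher_nonneg (ℓ : Fin d) (w : Cell M → ℝ) : 0 ≤ dirFisher M ℓ w :=
  Finset.sum_nonneg fun _ _ => mul_nonneg (by unfold τ; have := mK_pos M; positivity) (sq_nonneg _)

lemma dirVar_le (ℓ : Fin d) {w : Cell M → ℝ} (hw : ∀ K, 0 ≤ w K) {m : ℝ}
    (hmass : ∑ K : Cell M, mK M * w K ≤ m) : dirVar M ℓ w ≤ 2 * √(m * dirFisher M ℓ w) := by
  have hmK := mK_pos M
  have hCS := sum_abs_sub_le_of_perm (Equiv.addRight (Pi.single ℓ (1 : ZMod (M ℓ)))) hw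
  simp only [Equiv.coe_addRight] at hCS
  have hscale : mK M * M ℓ * √(∑ K, w K) * √(∑ K, (√(w (shift M K ℓ 1)) - √(w K)) ^ 2)
      = √((∑ K, mK M * w K) * dirFisher M ℓ w) := by
    rw [dirFisher, ← Finset.mul_sum, ← Finset.mul_sum, τ,
      show mK M * (∑ K, w K) * (mK M * (M ℓ : ℝ) ^ 2 * ∑ K, (√(w (shift M K ℓ 1)) - √(w K)) ^ 2)
        = (mK M * M ℓ) ^ 2 * ((∑ K, w K) * ∑ K, (√(w (shift M K ℓ 1)) - √(w K)) ^ 2) by ring,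
      Real.sqrt_mul (by positivity), Real.sqrt_sq (by positivity),
      Real.sqrt_mul (Finset.sum_nonneg fun K _ => hw K)]
    ring
  calc dirVar M ℓ w = mK M * M ℓ * ∑ K, |w (shift M K ℓ 1) - w K| := by
        rw [dirVar, Finset.mul_sum]
    _ ≤ mK M * M ℓ * (2 * √(∑ K, w K) * √(∑ K, (√(w (shift M K ℓ 1)) - √(w K)) ^ 2)) := by
        simp only [shift_eq_add, Int.cast_one]
        exact mul_le_mul_of_nonneg_left hCS (by positivity)
    _ = 2 * √((∑ K, mK M * w K) * dirFisher M ℓ w) := by rw [← hscale]; ring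
    _ ≤ 2 * √(m * dirFisher M ℓ w) := by
        have := dirFisher_nonneg M ℓ w
        gcongr

variable {n : ℕ} {Wd : Fin n → Fin n → Cell M → Cell M → ℝ}

lemma pot_shift_sub (hWd : ∀ i j K J L, Wd i j (K + L) (J + L) = Wd i j K J)
    (w : Fin n → Cell M → ℝ) (i : Fin n) (ℓ : Fin d) (K : Cell M) :
    pot M Wd w i (shift M K ℓ 1) - pot M Wd w i K
      = ∑ j, ∑ J : Cell M, mK M * Wd i j K J * (w j (shift M J ℓ 1) - w j J) := by
  have hshift : pot M Wd w i (K + Pi.single ℓ 1)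
      = ∑ j, ∑ J : Cell M, mK M * Wd i j K J * w j (J + Pi.single ℓ 1) := by
    refine Finset.sum_congr rfl fun j _ => ?_
    rw [← Equiv.sum_comp (Equiv.addRight (Pi.single ℓ (1 : ZMod (M ℓ))))]
    simp only [Equiv.coe_addRight, hWd]
  rw [shift_eq_add, Int.cast_one, hshift, pot]
  simp only [shift_eq_add, Int.cast_one, ← Finset.sum_sub_distrib, mul_sub]

lemma sum_τ_mul_pot_sub_mul_sub_le {C : Fin n → Fin n → ℝ}
    (hWd : ∀ i j K J L, Wd i j (K + L) (J + L) = Wd i j K J)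
    (hC : ∀ i j K J, |Wd i j K J| ≤ C i j) (u : Cell M → ℝ) (w : Fin n → Cell M → ℝ)
    (i : Fin n) (ℓ : Fin d) :
    ∑ K : Cell M, τ M ℓ * (pot M Wd w i (shift M K ℓ 1) - pot M Wd w i K)
        * (u (shift M K ℓ 1) - u K)
      ≤ ∑ j, C i j * (dirVar M ℓ u * dirVar M ℓ (w j)) := by
  have hmM : 0 < mK M * M ℓ := mul_pos (mK_pos M) (Nat.cast_pos.2 (NeZero.pos _))
  -- `τ_σ m(J) = (m(K) / Δx_ℓ)²`, split between the two difference quotients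
  calc _ = ∑ j, ∑ K : Cell M, ∑ J : Cell M, (mK M * M ℓ * (u (shift M K ℓ 1) - u K))
          * Wd i j K J * (mK M * M ℓ * (w j (shift M J ℓ 1) - w j J)) := by
        simp only [pot_shift_sub M hWd, Finset.mul_sum, Finset.sum_mul]
        rw [Finset.sum_comm]
        refine Finset.sum_congr rfl fun j _ => Finset.sum_congr rfl fun K _ =>
          Finset.sum_congr rfl fun J _ => ?_
        rw [τ]; ring
    _ ≤ ∑ j, C i j * ((∑ K : Cell M, |mK M * M ℓ * (u (shift M K ℓ 1) - u K)|)
          * ∑ J : Cell M, |mK M * M ℓ * (w j (shift M J ℓ 1) - w j J)|) :=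
        Finset.sum_le_sum fun j _ => sum_sum_mul_mul_le (hC i j) _ _
    _ = ∑ j, C i j * (dirVar M ℓ u * dirVar M ℓ (w j)) := by
        simp only [dirVar, abs_mul, abs_of_pos hmM]

lemma Xc_eq_sum (u p : Fin n → Cell M → ℝ) :
    Xc M u p = ∑ ℓ : Fin d, ∑ i, ∑ K : Cell M,
      τ M ℓ * (p i (shift M K ℓ 1) - p i K) * (u i (shift M K ℓ 1) - u i K) := by
  rw [Xc]
  exact (Finset.sum_congr rfl fun _ _ => Finset.sum_comm).trans Finset.sum_comm

lemma Fisher_eq_sum_dirFisher (u : Fin n → Cell M → ℝ) :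
    Fisher M u = ∑ ℓ : Fin d, ∑ i, dirFisher M ℓ (u i) := by
  rw [Fisher]
  exact (Finset.sum_congr rfl fun _ _ => Finset.sum_comm).trans Finset.sum_comm

theorem Xc_pot_le {C : Fin n → Fin n → ℝ} {m : Fin n → ℝ} {c : ℝ}
    (hWd : ∀ i j K J L, Wd i j (K + L) (J + L) = Wd i j K J)
    (hC : ∀ i j K J, |Wd i j K J| ≤ C i j)
    (hcol : ∀ j, ∑ i, C i j * m i ≤ c) (hrow : ∀ i, ∑ j, C i j * m j ≤ c)
    {u w : Fin n → Cell M → ℝ} (hu : ∀ i K, 0 ≤ u i K) (hw : ∀ i K, 0 ≤ w i K)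
    (hmu : ∀ i, ∑ K : Cell M, mK M * u i K ≤ m i) (hmw : ∀ i, ∑ K : Cell M, mK M * w i K ≤ m i) :
    Xc M u (pot M Wd w) ≤ 2 * c * (Fisher M u + Fisher M w) := by
  have hC0 (i j : Fin n) : 0 ≤ C i j := (abs_nonneg _).trans (hC i j 0 0)
  have hm0 (i : Fin n) : 0 ≤ m i :=
    (Finset.sum_nonneg fun K _ => mul_nonneg (mK_pos M).le (hu i K)).trans (hmu i)
  rw [Xc_eq_sum, Fisher_eq_sum_dirFisher, Fisher_eq_sum_dirFisher, ← Finset.sum_add_distrib,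
    Finset.mul_sum]
  refine Finset.sum_le_sum fun ℓ _ => ?_
  calc _ ≤ ∑ i, ∑ j, C i j * (dirVar M ℓ (u i) * dirVar M ℓ (w j)) :=
        Finset.sum_le_sum fun i _ => sum_τ_mul_pot_sub_mul_sub_le M hWd hC (u i) w i ℓ
    _ ≤ ∑ i, ∑ j, C i j * ((2 * √(m i * dirFisher M ℓ (u i)))
          * (2 * √(m j * dirFisher M ℓ (w j)))) :=
        Finset.sum_le_sum fun i _ => Finset.sum_le_sum fun j _ =>
          mul_le_mul_of_nonneg_left (mul_le_mul (dirVar_le M ℓ (hu i) (hmu i))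
            (dirVar_le M ℓ (hw j) (hmw j)) (dirVar_nonneg M ℓ (w j)) (by positivity)) (hC0 i j)
    _ = 2 * (2 * ∑ i, ∑ j, C i j * (√(m i * dirFisher M ℓ (u i))
          * √(m j * dirFisher M ℓ (w j)))) := by
        simp only [Finset.mul_sum]; ring_nf
    _ ≤ 2 * (c * (∑ i, dirFisher M ℓ (u i) + ∑ j, dirFisher M ℓ (w j))) :=
        mul_le_mul_of_nonneg_left (two_mul_sum_sum_mul_sqrt_le hC0 hm0
          (fun i => dirFisher_nonneg M ℓ (u i)) (fun j => dirFisher_nonneg M ℓ (w j)) hcol hrow)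
          zero_le_two
    _ = _ := by ring

lemma Xc_pot_midpoint (u v w : Fin n → Cell M → ℝ) :
    Xc M u (pot M Wd fun j J => (v j J + w j J) / 2)
      = (Xc M u (pot M Wd v) + Xc M u (pot M Wd w)) / 2 := by
  have hpot : (pot M Wd fun j J => (v j J + w j J) / 2)
      = fun i K => (pot M Wd v i K + pot M Wd w i K) / 2 := by
    funext i K
    simp only [pot, ← Finset.sum_add_distrib, Finset.sum_div]
    exact Finset.sum_congr rfl fun j _ => Finset.sum_congr rfl fun J _ => by ring
  rw [hpot]
  simp only [Xc, Finset.sum_div, ← Finset.sum_add_distrib]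
  exact Finset.sum_congr rfl fun i _ => Finset.sum_congr rfl fun K _ =>
    Finset.sum_congr rfl fun ℓ _ => by ring

lemma sum_τ_three_mul_add (u v : Fin n → Cell M → ℝ) :
    ∑ i, ∑ K : Cell M, ∑ ℓ : Fin d, τ M ℓ *
        (3 * (√(u i (shift M K ℓ 1)) - √(u i K)) ^ 2 + (√(v i (shift M K ℓ 1)) - √(v i K)) ^ 2)
      = 3 * Fisher M u + Fisher M v := by
  simp only [Fisher, mul_add, Finset.sum_add_distrib, Finset.mul_sum, mul_left_comm (τ M _) 3]

end Discrete

theorem cross_term_estimate_midpoint_general {d n : ℕ} (hn : 0 < n) (M : Fin d → ℕ)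
    [∀ ℓ, NeZero (M ℓ)]
    (W : Fin n → Fin n → Td d → ℝ)
    (hW : ∀ i j, MeasureTheory.MemLp (W i j) ⊤)
    (hsym : ∀ i j, ∀ᵐ x : Td d, W i j x = W j i (-x))
    (m_ : Fin n → ℝ)
    (uprev u : Fin n → Cell M → ℝ)
    (hprev : ∀ i K, 0 ≤ uprev i K) (hu : ∀ i K, 0 ≤ u i K)
    (hmassprev : ∀ i, ∑ K : Cell M, mK M * uprev i K ≤ m_ i)
    (hmass : ∀ i, ∑ K : Cell M, mK M * u i K ≤ m_ i) :
    Xc M u (pot M (fun i j => Wdisc M (W i j)) (fun j J => (u j J + uprev j J) / 2))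
      ≤ (Finset.univ.sup' (Finset.univ_nonempty_iff.mpr (Fin.pos_iff_nonempty.mp hn))
            fun j => ∑ i, (MeasureTheory.eLpNorm (W i j) ⊤ volume).toReal * m_ i)
        * ∑ i, ∑ K : Cell M, ∑ ℓ : Fin d, τ M ℓ *
            (3 * (Real.sqrt (u i (shift M K ℓ 1)) - Real.sqrt (u i K)) ^ 2
              + (Real.sqrt (uprev i (shift M K ℓ 1)) - Real.sqrt (uprev i K)) ^ 2) := by
  set C : Fin n → Fin n → ℝ := fun i j => (eLpNorm (W i j) ⊤ volume).toReal
  set c := Finset.univ.sup' _ fun j => ∑ i, C i j * m_ i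
  have hcol (j : Fin n) : ∑ i, C i j * m_ i ≤ c :=
    Finset.le_sup' (fun j => ∑ i, C i j * m_ i) (Finset.mem_univ j)
  have hrow (i : Fin n) : ∑ j, C i j * m_ j ≤ c := by
    have hCsymm (j : Fin n) : C i j = C j i := by
      simp only [C, eLpNorm_eq_of_ae_eq_comp_neg (hW j i).1 (hsym i j)]
    simpa only [hCsymm] using hcol i
  have hX (w : Fin n → Cell M → ℝ) (hw : ∀ i K, 0 ≤ w i K)
      (hmw : ∀ i, ∑ K : Cell M, mK M * w i K ≤ m_ i) :=
    Xc_pot_le M (fun i j => Wdisc_add_add M (W i j)) (fun i j => abs_Wdisc_le M (hW i j))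
      hcol hrow hu hw hmass hmw
  rw [Xc_pot_midpoint, sum_τ_three_mul_add]
  linarith [hX u hu hmass, hX uprev hprev hmassprev]

/-- estimate of the cross term by the discrete Fisher informations for
bounded kernels and mid-point potentials. -/
theorem cross_term_estimate_midpoint {d n : ℕ} (hn : 0 < n) (M : Fin d → ℕ)
    [∀ ℓ, NeZero (M ℓ)]
    (W : Fin n → Fin n → Td d → ℝ)
    (hW : ∀ i j, MeasureTheory.MemLp (W i j) ⊤)
    (hsym : ∀ i j, ∀ᵐ x : Td d, W i j x = W j i (-x))
    (m_ : Fin n → ℝ) (hm : ∀ i, 0 ≤ m_ i)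
    (uprev u : Fin n → Cell M → ℝ)
    (hprev : ∀ i K, 0 ≤ uprev i K) (hu : ∀ i K, 0 ≤ u i K)
    (hmassprev : ∀ i, ∑ K : Cell M, mK M * uprev i K ≤ m_ i)
    (hmass : ∀ i, ∑ K : Cell M, mK M * u i K ≤ m_ i) :
    Xc M u (pot M (fun i j => Wdisc M (W i j)) (fun j J => (u j J + uprev j J) / 2))
      ≤ (Finset.univ.sup' (Finset.univ_nonempty_iff.mpr (Fin.pos_iff_nonempty.mp hn))
            fun j => ∑ i, (MeasureTheory.eLpNorm (W i j) ⊤ volume).toReal * m_ i)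
        * ∑ i, ∑ K : Cell M, ∑ ℓ : Fin d, τ M ℓ *
            (3 * (Real.sqrt (u i (shift M K ℓ 1)) - Real.sqrt (u i K)) ^ 2
              + (Real.sqrt (uprev i (shift M K ℓ 1)) - Real.sqrt (uprev i K)) ^ 2) :=
  cross_term_estimate_midpoint_general hn M W hW hsym m_ uprev u hprev hu hmassprev hmass

end SG
end
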